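/- In the decorated lattice setting, there exists a polynomial s(λ) ∈ ℂ[λ] of degree exactly (ν−1)Q such that for every λ ∈ ℂ, P̃(z;λ) = s(λ)·∏_{n∈W} r_0(μ_n ⊙ z) + R(z;λ), where r_0(z) = z_1^{−1} + ⋯ + z_d^{−1}, every monomial z^α occurring in P̃(·;λ) satisfies α_1+⋯+α_d ≥ −Q, and every monomial z^α occurring in R(·;λ) satisfies α_1+⋯+α_d > −Q. Consequently, whenever s(λ) ≠ 0, h̃_0(z;λ) = h̃_∞(z;λ) = s(λ)(z_1⋯z_d)^Q ∏_{n∈W} r_0(μ_n ⊙ z). -/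

import Mathlib

open scoped BigOperators Classical

noncomputable section

/-- Multivariate Laurent polynomials in `m` variables over `ℂ`,
realized as the group algebra of `ℤ^m`. -/
abbrev MvLaurent (m : ℕ) : Type := AddMonoidAlgebra ℂ (Fin m → ℤ)

namespace MvL

variable {m : ℕ}

/-- The monomial `c · x^α`. -/
def mono (α : Fin m → ℤ) (c : ℂ) : MvLaurent m := AddMonoidAlgebra.ofCoeff (Finsupp.single α c)

/-- Evaluation of a Laurent polynomial at a point `x ∈ (ℂ*)^m`. -/
def eval (f : MvLaurent m) (x : Fin m → ℂ) : ℂ :=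
  Finsupp.sum f.coeff fun α c => c * ∏ j, x j ^ (α j)

/-- Units of the Laurent-polynomial ring: the nonzero monomials. -/
def IsUnitL (f : MvLaurent m) : Prop :=
  ∃ (c : ℂ) (α : Fin m → ℤ), c ≠ 0 ∧ f = mono α c

/-- Irreducibility of a Laurent polynomial. -/
def IrreducibleL (f : MvLaurent m) : Prop :=
  f ≠ 0 ∧ ¬ IsUnitL f ∧ ∀ g h : MvLaurent m, f = g * h → IsUnitL g ∨ IsUnitL h

/-- The zero set of `f` inside `(ℂ*)^m`. -/
def Vset (f : MvLaurent m) : Set (Fin m → ℂ) :=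
  {x | (∀ j, x j ≠ 0) ∧ eval f x = 0}

/-- `f` meets a point `y` of `(ℂ ∪ {∞})^m` if the closure of `V(f)` contains `y`. -/
def Meets (f : MvLaurent m) (y : Fin m → OnePoint ℂ) : Prop :=
  y ∈ closure ((fun (x : Fin m → ℂ) (j : Fin m) => (x j : OnePoint ℂ)) '' Vset f)

/-- The point `0_m`. -/
def zeroPt (m : ℕ) : Fin m → OnePoint ℂ := fun _ => ((0 : ℂ) : OnePoint ℂ)

/-- The point `(0_{m-1}, ∞)`. -/
def zeroInftyPt (m : ℕ) : Fin m → OnePoint ℂ :=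
  fun j => if (j : ℕ) = m - 1 then (OnePoint.infty : OnePoint ℂ) else ((0 : ℂ) : OnePoint ℂ)

/-- Negate the last exponent: realizes `x̂ = (x_1,…,x_{m-1},x_m⁻¹)`. -/
def negLast (m : ℕ) (α : Fin m → ℤ) : Fin m → ℤ :=
  fun j => if (j : ℕ) = m - 1 then -(α j) else α j

/-- `f(x̂)`. -/
def hat (f : MvLaurent m) : MvLaurent m := AddMonoidAlgebra.ofCoeff (Finsupp.mapDomain (negLast m) f.coeff)

/-- The least exponent of `x_j` occurring in `f` (junk value `0` for `f = 0`). -/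
def alphaMin (f : MvLaurent m) (j : Fin m) : ℤ :=
  ((Finsupp.support f.coeff).image fun α => α j).min.untopD 0

/-- The vector `α_{0,f}`. -/
def alpha0 (f : MvLaurent m) : Fin m → ℤ := fun j => max (-(alphaMin f j)) 0

/-- `f^+ = x^{α_{0,f}} f`. -/
def fplus (f : MvLaurent m) : MvLaurent m :=
  AddMonoidAlgebra.ofCoeff (Finsupp.mapDomain (fun α => α + alpha0 f) f.coeff)

/-- Total degree of an exponent vector. -/
def degOf (α : Fin m → ℤ) : ℤ := ∑ j, α j

/-- Degree of a Laurent polynomial (junk value `0` for `f = 0`). -/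
def degL (f : MvLaurent m) : ℤ :=
  ((Finsupp.support f.coeff).image degOf).max.unbotD 0

/-- Minimal total degree occurring in `f`. -/
def lowDeg (f : MvLaurent m) : ℤ :=
  ((Finsupp.support f.coeff).image degOf).min.untopD 0

/-- The lowest degree component of `f`. -/
def lowComp (f : MvLaurent m) : MvLaurent m :=
  AddMonoidAlgebra.ofCoeff (Finsupp.filter (fun α => degOf α = lowDeg f) f.coeff)

/-- `l`-degree of an exponent vector. -/
def degW (l : Fin m → ℤ) (α : Fin m → ℤ) : ℤ := ∑ j, l j * α j

/-- Minimal `l`-degree occurring in `f`. -/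
def lowDegW (l : Fin m → ℤ) (f : MvLaurent m) : ℤ :=
  ((Finsupp.support f.coeff).image (degW l)).min.untopD 0

/-- The component of lowest `l`-degree of `f`. -/
def lowCompW (l : Fin m → ℤ) (f : MvLaurent m) : MvLaurent m :=
  AddMonoidAlgebra.ofCoeff (Finsupp.filter (fun α => degW l α = lowDegW l f) f.coeff)

/-- `f(x^{⊙l})`. -/
def odotPow (l : Fin m → ℤ) (f : MvLaurent m) : MvLaurent m :=
  AddMonoidAlgebra.ofCoeff (Finsupp.mapDomain (fun α j => l j * α j) f.coeff)

/-- `f` is a polynomial: all exponents are nonnegative. -/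
def IsPolynomialL (f : MvLaurent m) : Prop :=
  ∀ α ∈ Finsupp.support f.coeff, ∀ j, 0 ≤ α j

/-- A positive monomial `c x^α`: `c ≠ 0`, `α ≠ 0`, all `α_j ≥ 0`. -/
def IsPosMonomial (f : MvLaurent m) : Prop :=
  ∃ (c : ℂ) (α : Fin m → ℤ), c ≠ 0 ∧ α ≠ 0 ∧ (∀ j, 0 ≤ α j) ∧ f = mono α c

/-- A proper polynomial: a polynomial with no positive monomial factor
(in the polynomial ring). -/
def IsProper (f : MvLaurent m) : Prop :=
  IsPolynomialL f ∧
    ¬ ∃ g h : MvLaurent m, IsPosMonomial g ∧ IsPolynomialL h ∧ f = g * h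

/-- `f` is a unit times a product of exactly `k` irreducible Laurent polynomials. -/
def HasFactorization (f : MvLaurent m) (k : ℕ) : Prop :=
  ∃ (u : MvLaurent m) (s : Multiset (MvLaurent m)),
    IsUnitL u ∧ (∀ g ∈ s, IrreducibleL g) ∧ Multiset.card s = k ∧ f = u * s.prod

/-- `f` has at most `k` irreducible components. -/
def HasAtMostComponents (f : MvLaurent m) (k : ℕ) : Prop :=
  ∃ j ≤ k, HasFactorization f j

/-- `f` has exactly `k` irreducible components (and not fewer). -/
def HasExactlyComponents (f : MvLaurent m) (k : ℕ) : Prop :=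
  HasFactorization f k ∧ ∀ j < k, ¬ HasFactorization f j

/-- Irreducibility in the polynomial ring `ℂ[x_1,…,x_m]`
(units there are the nonzero constants). -/
def IrreduciblePolyL (g : MvLaurent m) : Prop :=
  IsPolynomialL g ∧ g ≠ 0 ∧ (¬ ∃ c : ℂ, g = mono 0 c) ∧
    ∀ a b : MvLaurent m, IsPolynomialL a → IsPolynomialL b → g = a * b →
      (∃ c : ℂ, c ≠ 0 ∧ a = mono 0 c) ∨ (∃ c : ℂ, c ≠ 0 ∧ b = mono 0 c)

end MvL

namespace Per

/-- `e^{2πi r}`. -/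
def e2πi (r : ℂ) : ℂ := Complex.exp (2 * Real.pi * Complex.I * r)

/-- The fundamental domain `W = {w ∈ ℤ^d : 0 ≤ w_i < q_i}`. -/
abbrev W (d : ℕ) (q : Fin d → ℕ) : Type := (t : Fin d) → Fin (q t)

/-- Inclusion of `W` into `ℤ^d`. -/
def wz {d : ℕ} {q : Fin d → ℕ} (w : W d q) : Fin d → ℤ := fun t => ((w t : ℕ) : ℤ)

/-- `Q = q_1 ⋯ q_d`. -/
def Qn {d : ℕ} (q : Fin d → ℕ) : ℕ := ∏ t, q t

/-- `q` viewed in `ℤ^d`. -/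
def qz {d : ℕ} (q : Fin d → ℕ) : Fin d → ℤ := fun t => (q t : ℤ)

/-- `μ_n = (e^{2πi n_1/q_1}, …, e^{2πi n_d/q_d})`. -/
def μ {d : ℕ} (q : Fin d → ℕ) (n : Fin d → ℤ) : Fin d → ℂ :=
  fun t => e2πi ((n t : ℂ) / (q t : ℂ))

/-- The standard basis exponent vector `e_{t0}` of `ℤ^m`. -/
def eV (m : ℕ) (t0 : Fin m) : Fin m → ℤ := fun t => if t = t0 then 1 else 0

/-- `V` is `q`-periodic. -/
def QPeriodic {d ν : ℕ} (q : Fin d → ℕ) (V : Fin ν → (Fin d → ℤ) → ℂ) : Prop :=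
  ∀ (j : Fin ν) (n lv : Fin d → ℤ), V j (fun t => n t + lv t * (q t : ℤ)) = V j n

/-- The Fourier coefficient `V̂_j(q^* ⊙ (w-w')) = Q^{-1/2} Σ_{n∈W} e^{-2πi⟨q^*⊙(w-w'),n⟩} V(j,n)`. -/
def Vhat {d ν : ℕ} (q : Fin d → ℕ) (V : Fin ν → (Fin d → ℤ) → ℂ) (j : Fin ν)
    (w w' : W d q) : ℂ :=
  ((Real.sqrt (Qn q) : ℂ))⁻¹ *
    ∑ n : W d q,
      Complex.exp (-(2 * Real.pi * Complex.I) *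
        ∑ t, (((wz w t - wz w' t : ℤ) : ℂ) / (q t : ℂ)) * ((wz n t : ℤ) : ℂ)) *
      V j (wz n)

/-- The matrix `B_V`, with entries regarded as constant Laurent polynomials:
`((i,w),(j,w'))` entry `δ_{ij} V̂_i(q^*⊙(w-w'))`. -/
def BmatL {d : ℕ} (ν : ℕ) (q : Fin d → ℕ) (V : Fin ν → (Fin d → ℤ) → ℂ) :
    Matrix (Fin ν × W d q) (Fin ν × W d q) (MvLaurent d) :=
  fun x y => if x.1 = y.1 then MvL.mono 0 (Vhat q V x.1 x.2 y.2) else 0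

end Per

namespace Decor

open Per

/-- `b₀(μ_n ⊙ z) = Σ_t (μ_{n,t} z_t + (μ_{n,t} z_t)⁻¹)` as a formal Laurent
polynomial in `z`. -/
def b0 (d : ℕ) (q : Fin d → ℕ) (n : Fin d → ℤ) : MvLaurent d :=
  ∑ t, (MvL.mono (eV d t) (μ q n t) + MvL.mono (-(eV d t)) ((μ q n t)⁻¹))

/-- The decorated symbol `p(μ_n ⊙ z)`: `(1,1)` entry `b₀(μ_n ⊙ z)`, entries `1`
on the cycle adjacency positions `(i,i±1)` and `(1,ν), (ν,1)`, zero elsewhere. -/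
def decorBlock (d ν : ℕ) (q : Fin d → ℕ) (n : Fin d → ℤ) :
    Matrix (Fin ν) (Fin ν) (MvLaurent d) :=
  fun i j =>
    if i = j then (if (i : ℕ) = 0 then b0 d q n else 0)
    else if ((i : ℕ) + 1 = (j : ℕ) ∨ (j : ℕ) + 1 = (i : ℕ) ∨
              ((i : ℕ) = 0 ∧ (j : ℕ) = ν - 1) ∨ ((j : ℕ) = 0 ∧ (i : ℕ) = ν - 1))
      then 1 else 0

/-- The block-diagonal matrix `D_z` for the decorated lattice (formal in `z`). -/
def decorD (d ν : ℕ) (q : Fin d → ℕ) :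
    Matrix (Fin ν × W d q) (Fin ν × W d q) (MvLaurent d) :=
  fun x y => if x.2 = y.2 then decorBlock d ν q (wz x.2) x.1 y.1 else 0

/-- `P̃(z;λ) = det(D_z + B_V - λI)` as a formal Laurent polynomial in `z`. -/
def decorPt (d ν : ℕ) (q : Fin d → ℕ) (V : Fin ν → (Fin d → ℤ) → ℂ) (lam : ℂ) :
    MvLaurent d :=
  Matrix.det
    (decorD d ν q + BmatL ν q V -
      (MvL.mono 0 lam : MvLaurent d) •
        (1 : Matrix (Fin ν × W d q) (Fin ν × W d q) (MvLaurent d)))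

/-- `r₀(μ_n ⊙ z) = Σ_t (μ_{n,t} z_t)⁻¹` as a formal Laurent polynomial in `z`. -/
def r0mu (d : ℕ) (q : Fin d → ℕ) (n : Fin d → ℤ) : MvLaurent d :=
  ∑ t, MvL.mono (-(eV d t)) ((μ q n t)⁻¹)

end Decor

open MvL Per Decor

/-!
Only the diagonal entries of `D_z + B_V - λ` at the vertices `(1, n)`, `n ∈ W`, depend on `z`, and
they equal `b₀(μ_n ⊙ z)`. Expanding the determinant multilinearly in these rows gives
`P̃ = Σ_{F ⊆ W} c_F(λ) ∏_{n ∈ F} b₀(μ_n ⊙ z)` with constants `c_F(λ)`; the top coefficient `c_W(λ)`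
is the determinant of the `z`-free part minus `λ` on the remaining `(ν - 1)Q` vertices, i.e. up to
sign a characteristic polynomial of that size. Every monomial of `b₀` has total degree `±1` and
each exponent in `{-1, 0, 1}`, so total degree `-Q` is reached only by `c_W ∏ r₀(μ_n ⊙ z)`, and
the exponent of `z_t` is `≥ -Q` with `z_t^{-Q}` occurring with coefficient `c_W ∏_n μ_{n,t}⁻¹`.
Hence `α₀ = (Q, …, Q)` and `h̃₀ = s(λ) z^Q ∏ r₀(μ_n ⊙ z)`. Inverting `z_d` turns `μ_n` into `μ_{n'}`,
where `n ↦ n'` negates the last coordinate modulo `q_d`; this permutes `W`, so `h̃_∞` is the same.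
-/

theorem Finset.untopD_min_image_eq {α : Type*} {s : Finset α} (f : α → ℤ) {c : ℤ}
    (hle : ∀ a ∈ s, c ≤ f a) (hex : ∃ a ∈ s, f a = c) : (s.image f).min.untopD 0 = c := by
  obtain ⟨a, ha, rfl⟩ := hex
  rw [le_antisymm (Finset.min_le (Finset.mem_image_of_mem f ha))
    (Finset.le_min fun b hb => by
      obtain ⟨b, hb', rfl⟩ := Finset.mem_image.1 hb
      exact WithTop.coe_le_coe.2 (hle b hb'))]
  rfl

namespace Matrix

variable {n R : Type*} [Fintype n] [DecidableEq n] [CommRing R]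

theorem det_diagonal_add (c : n → R) (A : Matrix n n R) :
    (diagonal c + A).det =
      ∑ S : Finset n, (∏ i ∈ S, c i) *
        (of fun i j => if i ∈ S then (1 : Matrix n n R) i j else A i j).det := by
  have hexp := MultilinearMap.map_add_univ detRowAlternating.toMultilinearMap
    (fun i => c i • (Pi.single i 1 : n → R)) fun i => A i
  have hrows : diagonal c + A = (fun i => c i • (Pi.single i 1 : n → R)) + fun i => A i := by
    ext i j
    by_cases h : i = j <;> simp [diagonal, h, eq_comm]
  rw [hrows]
  refine hexp.trans (Finset.sum_congr rfl fun S _ => ?_)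
  set M : Matrix n n R := of fun i j => if i ∈ S then (1 : Matrix n n R) i j else A i j
  have hM : (S.piecewise (fun i => c i • (Pi.single i 1 : n → R)) fun i => A i) =
      S.piecewise (fun i => c i • M i) fun i => M i := by
    ext i j
    by_cases hi : i ∈ S <;> simp [M, hi, one_apply, Pi.single_apply, eq_comm]
  rw [hM]
  exact (MultilinearMap.map_piecewise_smul detRowAlternating.toMultilinearMap c (fun i => M i) S).trans
    (smul_eq_mul _ _)

theorem det_of_ite_one_eq_det_submatrix (S : Finset n) (A : Matrix n n R) :
    (of fun i j => if i ∈ S then (1 : Matrix n n R) i j else A i j).det =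
      (A.submatrix (Subtype.val : {i // i ∉ S} → n) Subtype.val).det := by
  rw [← det_submatrix_equiv_self (Equiv.sumCompl (· ∈ S))]
  have hblocks : (of fun i j => if i ∈ S then (1 : Matrix n n R) i j else A i j).submatrix
      (Equiv.sumCompl (· ∈ S)) (Equiv.sumCompl (· ∈ S)) =
      fromBlocks 1 0 (A.submatrix (Subtype.val : {i // i ∉ S} → n) Subtype.val)
        (A.submatrix Subtype.val Subtype.val) := by
    ext (i | i) (j | j)
    · simp only [submatrix_apply, Equiv.sumCompl_apply_inl, of_apply, if_pos i.2, one_apply,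
        fromBlocks_apply₁₁, Subtype.ext_iff]
    · simp only [submatrix_apply, Equiv.sumCompl_apply_inl, Equiv.sumCompl_apply_inr, of_apply,
        if_pos i.2, one_apply, fromBlocks_apply₁₂, zero_apply]
      exact if_neg fun h : (i : n) = j => j.2 (h ▸ i.2)
    · simp [i.2]
    · simp [i.2]
  rw [hblocks, det_fromBlocks_zero₁₂, det_one, one_mul]

end Matrix

namespace MvL

variable {m : ℕ}

theorem mono_mul_mono (α β : Fin m → ℤ) (c e : ℂ) :
    mono α c * mono β e = mono (α + β) (c * e) :=
  AddMonoidAlgebra.single_mul_single _ _ _ _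

theorem mono_zero_mul (c : ℂ) (f : MvLaurent m) : mono 0 c * f = c • f :=
  (Algebra.smul_def c f).symm

theorem eq_of_mem_support_mono {α β : Fin m → ℤ} {c : ℂ}
    (h : α ∈ (mono β c).coeff.support) : α = β :=
  Finset.mem_singleton.1 (Finsupp.support_single_subset h)

section Support

variable {P : (Fin m → ℤ) → Prop}

theorem forall_mem_support_add {f g : MvLaurent m} (hf : ∀ α ∈ f.coeff.support, P α)
    (hg : ∀ α ∈ g.coeff.support, P α) : ∀ α ∈ (f + g).coeff.support, P α := fun α hα =>
  (Finset.mem_union.1 (Finsupp.support_add hα)).elim (hf α) (hg α)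

theorem forall_mem_support_sum {ι : Type*} (s : Finset ι) (f : ι → MvLaurent m)
    (h : ∀ i ∈ s, ∀ α ∈ (f i).coeff.support, P α) :
    ∀ α ∈ (∑ i ∈ s, f i).coeff.support, P α := by
  intro α hα
  rw [AddMonoidAlgebra.coeff_sum] at hα
  obtain ⟨i, hi, hαi⟩ := Finset.mem_biUnion.1 (Finsupp.support_finsetSum hα)
  exact h i hi α hαi

theorem forall_mem_support_mul {f g : MvLaurent m}
    (h : ∀ α ∈ f.coeff.support, ∀ β ∈ g.coeff.support, P (α + β)) :
    ∀ γ ∈ (f * g).coeff.support, P γ := fun γ hγ => by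
  obtain ⟨α, hα, β, hβ, rfl⟩ :=
    Finset.mem_add.1 (AddMonoidAlgebra.support_coeff_mul_subset f g hγ)
  exact h α hα β hβ

end Support

section Weight

variable (φ : (Fin m → ℤ) →+ ℤ)

theorem le_weight_of_mem_support_mul {f g : MvLaurent m} {a b : ℤ}
    (hf : ∀ α ∈ f.coeff.support, a ≤ φ α) (hg : ∀ β ∈ g.coeff.support, b ≤ φ β) :
    ∀ γ ∈ (f * g).coeff.support, a + b ≤ φ γ :=
  forall_mem_support_mul fun α hα β hβ => (map_add φ α β).symm ▸ add_le_add (hf α hα) (hg β hβ)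

theorem le_weight_of_mem_support_prod {ι : Type*} (s : Finset ι) (f : ι → MvLaurent m)
    (a : ι → ℤ) (h : ∀ i ∈ s, ∀ α ∈ (f i).coeff.support, a i ≤ φ α) :
    ∀ α ∈ (∏ i ∈ s, f i).coeff.support, ∑ i ∈ s, a i ≤ φ α := by
  induction s using Finset.cons_induction with
  | empty =>
    intro α hα
    rw [eq_of_mem_support_mono hα, Finset.sum_empty, map_zero]
  | cons i s hi ih =>
    rw [Finset.prod_cons, Finset.sum_cons]
    exact le_weight_of_mem_support_mul φ (h i (Finset.mem_cons_self i s))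
      (ih fun j hj => h j (Finset.mem_cons_of_mem hj))

theorem weight_eq_of_mem_support_prod {ι : Type*} (s : Finset ι)
    (f : ι → MvLaurent m) (a : ι → ℤ) (h : ∀ i ∈ s, ∀ α ∈ (f i).coeff.support, φ α = a i) :
    ∀ α ∈ (∏ i ∈ s, f i).coeff.support, φ α = ∑ i ∈ s, a i := fun α hα => by
  have hle := le_weight_of_mem_support_prod φ s f a (fun i hi β hβ => (h i hi β hβ).ge) α hα
  have hge := le_weight_of_mem_support_prod (-φ) s f (fun i => -a i)
    (fun i hi β hβ => by simp [h i hi β hβ]) α hα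
  simp only [Finset.sum_neg_distrib, AddMonoidHom.neg_apply, neg_le_neg_iff] at hge
  exact le_antisymm hge hle

theorem coeff_mul_add_of_unique_min {f g : MvLaurent m} {a b : Fin m → ℤ}
    (hf : ∀ α ∈ f.coeff.support, φ a ≤ φ α ∧ (φ α = φ a → α = a))
    (hg : ∀ β ∈ g.coeff.support, φ b ≤ φ β) :
    (f * g).coeff (a + b) = f.coeff a * g.coeff b := by
  rw [AddMonoidAlgebra.coeff_mul, Finsupp.sum, Finset.sum_eq_single a]
  · rw [Finsupp.sum, Finset.sum_eq_single b]
    · simp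
    · intro β _ hβb
      rw [if_neg fun h => hβb (add_left_cancel h)]
    · intro hb
      simp [Finsupp.notMem_support_iff.1 hb]
  · intro α hα hαa
    refine Finset.sum_eq_zero fun β hβ => if_neg fun h => ?_
    have hlt : φ a < φ α := lt_of_le_of_ne (hf α hα).1 fun he => hαa ((hf α hα).2 he.symm)
    have hsum : φ α + φ β = φ a + φ b := by rw [← map_add, ← map_add, h]
    linarith [hg β hβ]
  · intro ha
    simp [Finsupp.notMem_support_iff.1 ha, Finsupp.sum]

theorem coeff_prod_sum_of_unique_min {ι : Type*} (s : Finset ι) (f : ι → MvLaurent m)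
    (a : ι → Fin m → ℤ)
    (h : ∀ i ∈ s, ∀ α ∈ (f i).coeff.support, φ (a i) ≤ φ α ∧ (φ α = φ (a i) → α = a i)) :
    (∏ i ∈ s, f i).coeff (∑ i ∈ s, a i) = ∏ i ∈ s, (f i).coeff (a i) := by
  induction s using Finset.cons_induction with
  | empty => simp
  | cons i s hi ih =>
    have hrest := le_weight_of_mem_support_prod φ s f (fun j => φ (a j))
      fun j hj α hα => (h j (Finset.mem_cons_of_mem hj) α hα).1
    rw [Finset.prod_cons, Finset.sum_cons,
      coeff_mul_add_of_unique_min φ (h i (Finset.mem_cons_self i s))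
        fun β hβ => (map_sum φ a s).trans_le (hrest β hβ),
      ih fun j hj => h j (Finset.mem_cons_of_mem hj), Finset.prod_cons]

end Weight

theorem alphaMin_eq {f : MvLaurent m} {j : Fin m} {c : ℤ} (hle : ∀ α ∈ f.coeff.support, c ≤ α j)
    (hex : ∃ α ∈ f.coeff.support, α j = c) : alphaMin f j = c :=
  Finset.untopD_min_image_eq _ hle hex

theorem mono_one_mul (v : Fin m → ℤ) (f : MvLaurent m) :
    mono v 1 * f = AddMonoidAlgebra.ofCoeff (Finsupp.mapDomain (· + v) f.coeff) := by
  induction f using AddMonoidAlgebra.induction_linear with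
  | zero => simp
  | add f g hf hg =>
    rw [mul_add, hf, hg, AddMonoidAlgebra.coeff_add, Finsupp.mapDomain_add]
    rfl
  | single a c =>
    rw [show AddMonoidAlgebra.single a c = mono a c from rfl, mono_mul_mono, one_mul, add_comm]
    simp [mono, Finsupp.mapDomain_single]

theorem fplus_eq_mono_mul (f : MvLaurent m) : fplus f = mono (alpha0 f) 1 * f :=
  (mono_one_mul _ f).symm

theorem lowComp_add_of_lt {g h : MvLaurent m} {c : ℤ} (hg0 : g ≠ 0)
    (hg : ∀ α ∈ g.coeff.support, degOf α = c) (hh : ∀ α ∈ h.coeff.support, c < degOf α) :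
    lowComp (g + h) = g := by
  have hcoeff : ∀ α, (g + h).coeff α = g.coeff α + h.coeff α := fun _ => rfl
  have hh_eq : ∀ α, degOf α ≤ c → h.coeff α = 0 := fun α hα =>
    Finsupp.notMem_support_iff.1 fun hmem => (hh α hmem).not_ge hα
  have hg_eq : ∀ α, degOf α ≠ c → g.coeff α = 0 := fun α hα =>
    Finsupp.notMem_support_iff.1 fun hmem => hα (hg α hmem)
  have hlow : lowDeg (g + h) = c := by
    refine Finset.untopD_min_image_eq _ (fun α hα => ?_) ?_
    · by_contra! hlt
      rw [Finsupp.mem_support_iff, hcoeff, hg_eq α hlt.ne, hh_eq α hlt.le, add_zero] at hα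
      exact hα rfl
    · obtain ⟨α, hα⟩ := Finsupp.support_nonempty_iff.2 fun h0 => hg0 (AddMonoidAlgebra.ext h0)
      refine ⟨α, ?_, hg α hα⟩
      rw [Finsupp.mem_support_iff, hcoeff, hh_eq α (hg α hα).le, add_zero]
      exact Finsupp.mem_support_iff.1 hα
  ext α
  rw [lowComp, hlow, AddMonoidAlgebra.coeff_ofCoeff, Finsupp.filter_apply, hcoeff]
  split_ifs with hα
  · rw [hh_eq α hα.le, add_zero]
  · rw [hg_eq α hα]

def coordWeight (t : Fin m) : (Fin m → ℤ) →+ ℤ := Pi.evalAddMonoidHom (fun _ => ℤ) t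

def degWeight (m : ℕ) : (Fin m → ℤ) →+ ℤ where
  toFun := degOf
  map_zero' := by simp [degOf]
  map_add' a b := by simp [degOf, Finset.sum_add_distrib]

theorem degOf_eV (t : Fin m) : degOf (eV m t) = 1 := by
  simp [degOf, eV]

theorem degOf_neg_eV (t : Fin m) : degOf (-(eV m t)) = -1 := by
  simp [degOf, eV]

theorem eV_injective : Function.Injective (eV m) := fun s t h => by
  simpa [eV] using congrFun h s

theorem eV_ne_neg_eV (s t : Fin m) : eV m s ≠ -(eV m t) := fun h => by
  have := congrFun h s
  simp only [eV, Pi.neg_apply] at this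
  split_ifs at this <;> omega

theorem abs_coordWeight_eV_le (s t : Fin m) : |coordWeight s (eV m t)| ≤ 1 := by
  simp only [coordWeight, Pi.evalAddMonoidHom_apply, eV]
  split_ifs <;> simp

theorem abs_degWeight_eV_le (t : Fin m) : |degWeight m (eV m t)| ≤ 1 :=
  (congrArg abs (degOf_eV t)).le.trans (by simp)

/-- `b₀(v ⊙ x)`; `Decor.b0 d q n` unfolds to `twistedB0 d (μ q n)`. -/
def twistedB0 (m : ℕ) (v : Fin m → ℂ) : MvLaurent m :=
  ∑ t, (mono (eV m t) (v t) + mono (-(eV m t)) ((v t)⁻¹))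

/-- `r₀(v ⊙ x)`; `Decor.r0mu d q n` unfolds to `twistedR0 d (μ q n)`. -/
def twistedR0 (m : ℕ) (v : Fin m → ℂ) : MvLaurent m :=
  ∑ t, mono (-(eV m t)) ((v t)⁻¹)

theorem twistedB0_eq_twistedR0_add (v : Fin m → ℂ) :
    twistedB0 m v = twistedR0 m v + ∑ t, mono (eV m t) (v t) := by
  rw [twistedB0, twistedR0, Finset.sum_add_distrib, add_comm]

theorem exists_eq_of_mem_support_twistedR0 (v : Fin m → ℂ) :
    ∀ α ∈ (twistedR0 m v).coeff.support, ∃ t, α = -(eV m t) :=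
  forall_mem_support_sum _ _ fun t _ _ hα => ⟨t, eq_of_mem_support_mono hα⟩

theorem exists_eq_of_mem_support_twistedB0 (v : Fin m → ℂ) :
    ∀ α ∈ (twistedB0 m v).coeff.support, ∃ t, α = eV m t ∨ α = -(eV m t) := by
  rw [twistedB0_eq_twistedR0_add]
  refine forall_mem_support_add (fun α hα => ?_) (forall_mem_support_sum _ _ fun t _ α hα => ?_)
  · obtain ⟨t, rfl⟩ := exists_eq_of_mem_support_twistedR0 v α hα
    exact ⟨t, Or.inr rfl⟩
  · exact ⟨t, Or.inl (eq_of_mem_support_mono hα)⟩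

theorem degOf_of_mem_support_twistedR0 {v : Fin m → ℂ} {α : Fin m → ℤ}
    (hα : α ∈ (twistedR0 m v).coeff.support) : degOf α = -1 := by
  obtain ⟨t, rfl⟩ := exists_eq_of_mem_support_twistedR0 v α hα
  exact degOf_neg_eV t

theorem neg_one_le_weight_of_mem_support_twistedB0 (φ : (Fin m → ℤ) →+ ℤ)
    (hφ : ∀ t, |φ (eV m t)| ≤ 1) {v : Fin m → ℂ} {α : Fin m → ℤ}
    (hα : α ∈ (twistedB0 m v).coeff.support) : -1 ≤ φ α := by
  obtain ⟨t, rfl | rfl⟩ := exists_eq_of_mem_support_twistedB0 v α hα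
  · exact (abs_le.1 (hφ t)).1
  · rw [map_neg, neg_le_neg_iff]
    exact (abs_le.1 (hφ t)).2

theorem coeff_twistedB0_neg_eV (v : Fin m → ℂ) (t : Fin m) :
    (twistedB0 m v).coeff (-(eV m t)) = (v t)⁻¹ := by
  simp only [twistedB0, mono, AddMonoidAlgebra.coeff_sum, AddMonoidAlgebra.coeff_add,
    Finset.sum_apply', Finsupp.add_apply, Finsupp.single_apply,
    if_neg (eV_ne_neg_eV _ t), zero_add, neg_inj, eV_injective.eq_iff, Finset.sum_ite_eq',
    Finset.mem_univ, if_true]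

theorem coeff_twistedR0_neg_eV (v : Fin m → ℂ) (t : Fin m) :
    (twistedR0 m v).coeff (-(eV m t)) = (v t)⁻¹ := by
  simp only [twistedR0, mono, AddMonoidAlgebra.coeff_sum, Finset.sum_apply', Finsupp.single_apply,
    neg_inj, eV_injective.eq_iff, Finset.sum_ite_eq', Finset.mem_univ, if_true]

theorem twistedR0_ne_zero (hm : 0 < m) {v : Fin m → ℂ} (hv : ∀ t, v t ≠ 0) : twistedR0 m v ≠ 0 :=
  fun h => inv_ne_zero (hv ⟨0, hm⟩) <| by
    rw [← coeff_twistedR0_neg_eV, h, AddMonoidAlgebra.coeff_zero, Finsupp.zero_apply]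

theorem coordWeight_unique_min_twistedB0 (v : Fin m → ℂ) (t : Fin m) :
    ∀ α ∈ (twistedB0 m v).coeff.support, coordWeight t (-(eV m t)) ≤ coordWeight t α ∧
      (coordWeight t α = coordWeight t (-(eV m t)) → α = -(eV m t)) := by
  intro α hα
  obtain ⟨s, rfl | rfl⟩ := exists_eq_of_mem_support_twistedB0 v α hα <;>
    by_cases hst : t = s <;> simp [coordWeight, eV, hst]

theorem neg_card_lt_degOf_of_mem_support_prod_sub {ι : Type*} (v : ι → Fin m → ℂ) (s : Finset ι) :
    ∀ α ∈ (∏ i ∈ s, twistedB0 m (v i) - ∏ i ∈ s, twistedR0 m (v i)).coeff.support,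
      -(s.card : ℤ) < degOf α := by
  induction s using Finset.cons_induction with
  | empty => simp
  | cons a s ha ih =>
    have hsplit : ∏ i ∈ Finset.cons a s ha, twistedB0 m (v i) -
          ∏ i ∈ Finset.cons a s ha, twistedR0 m (v i) =
        twistedB0 m (v a) * (∏ i ∈ s, twistedB0 m (v i) - ∏ i ∈ s, twistedR0 m (v i)) +
          (∑ t, mono (eV m t) (v a t)) * ∏ i ∈ s, twistedR0 m (v i) := by
      rw [Finset.prod_cons, Finset.prod_cons, twistedB0_eq_twistedR0_add]
      ring
    rw [hsplit, Finset.card_cons]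
    refine forall_mem_support_add (fun α hα => ?_) (fun α hα => ?_)
    · have := le_weight_of_mem_support_mul (degWeight m)
        (fun _ => neg_one_le_weight_of_mem_support_twistedB0 _ abs_degWeight_eV_le)
        (fun β hβ => Int.add_one_le_iff.2 (ih β hβ)) α hα
      change _ ≤ degOf α at this
      omega
    · have := le_weight_of_mem_support_mul (degWeight m) (a := 1)
        (forall_mem_support_sum _ _ fun t _ β hβ => by
          rw [eq_of_mem_support_mono hβ]; exact (degOf_eV t).ge)
        (fun β hβ => (weight_eq_of_mem_support_prod (degWeight m) s _ (fun _ => -1)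
          (fun i _ γ hγ => degOf_of_mem_support_twistedR0 hγ) β hβ).ge) α hα
      change _ ≤ degOf α at this
      simp only [Finset.sum_neg_distrib, Finset.sum_const, Int.nsmul_eq_mul, mul_one] at this
      omega

theorem neg_card_le_weight_of_mem_support_prod_twistedB0 {ι : Type*} (v : ι → Fin m → ℂ)
    (φ : (Fin m → ℤ) →+ ℤ) (hφ : ∀ t, |φ (eV m t)| ≤ 1) (F : Finset ι) :
    ∀ α ∈ (∏ i ∈ F, twistedB0 m (v i)).coeff.support, -(F.card : ℤ) ≤ φ α := fun α hα => by
  simpa using le_weight_of_mem_support_prod φ F _ (fun _ => -1)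
    (fun i _ _ => neg_one_le_weight_of_mem_support_twistedB0 φ hφ) α hα

def negLastHom (m : ℕ) : (Fin m → ℤ) →+ (Fin m → ℤ) where
  toFun := negLast m
  map_zero' := by ext; simp [negLast]
  map_add' a b := by ext j; simp only [negLast, Pi.add_apply]; split_ifs <;> ring

def hatRingHom (m : ℕ) : MvLaurent m →+* MvLaurent m :=
  AddMonoidAlgebra.mapDomainRingHom ℂ (negLastHom m)

theorem hatRingHom_apply (f : MvLaurent m) : hatRingHom m f = hat f := rfl

theorem hat_mono (α : Fin m → ℤ) (c : ℂ) : hat (mono α c) = mono (negLast m α) c :=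
  AddMonoidAlgebra.ext Finsupp.mapDomain_single

theorem hat_smul (c : ℂ) (f : MvLaurent m) : hat (c • f) = c • hat f :=
  AddMonoidAlgebra.ext (Finsupp.mapDomain_smul c f.coeff)

theorem negLast_eV (t : Fin m) :
    negLast m (eV m t) = if (t : ℕ) = m - 1 then -(eV m t) else eV m t := by
  ext j
  by_cases hj : j = t
  · subst hj
    split_ifs <;> simp [negLast, *]
  · split_ifs <;> simp [negLast, eV, hj]

def invLast (v : Fin m → ℂ) : Fin m → ℂ := fun t => if (t : ℕ) = m - 1 then (v t)⁻¹ else v t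

theorem hat_twistedB0 (v : Fin m → ℂ) : hat (twistedB0 m v) = twistedB0 m (invLast v) := by
  rw [← hatRingHom_apply, twistedB0, twistedB0, map_sum]
  refine Finset.sum_congr rfl fun t _ => ?_
  rw [map_add, hatRingHom_apply, hatRingHom_apply, hat_mono, hat_mono,
    show negLast m (-(eV m t)) = -negLast m (eV m t) from map_neg (negLastHom m) _, negLast_eV,
    invLast]
  split_ifs
  · rw [neg_neg, inv_inv, add_comm]
  · rfl

section Expansion

variable {ι : Type*} [Fintype ι] (c : Finset ι → ℂ) (v : ι → Fin m → ℂ)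

def b0Expansion : MvLaurent m :=
  ∑ F : Finset ι, c F • ∏ i ∈ F, twistedB0 m (v i)

theorem neg_card_le_weight_of_mem_support_b0Expansion (φ : (Fin m → ℤ) →+ ℤ)
    (hφ : ∀ t, |φ (eV m t)| ≤ 1) :
    ∀ α ∈ (b0Expansion c v).coeff.support, -(Fintype.card ι : ℤ) ≤ φ α :=
  forall_mem_support_sum _ _ fun F _ α hα =>
    (neg_le_neg (Nat.cast_le.2 (Finset.card_le_univ F))).trans
      (neg_card_le_weight_of_mem_support_prod_twistedB0 v φ hφ F α (Finsupp.support_smul hα))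

theorem coeff_b0Expansion_neg_eV (t : Fin m) :
    (b0Expansion c v).coeff (Fintype.card ι • -(eV m t)) =
      c Finset.univ * ∏ i, (v i t)⁻¹ := by
  rw [b0Expansion, AddMonoidAlgebra.coeff_sum, Finset.sum_apply',
    Finset.sum_eq_single_of_mem Finset.univ (Finset.mem_univ _)]
  · rw [AddMonoidAlgebra.coeff_smul_apply, smul_eq_mul, ← Finset.card_univ, ← Finset.sum_const,
      coeff_prod_sum_of_unique_min (coordWeight t) _ _ _
        fun i _ => coordWeight_unique_min_twistedB0 (v i) t]
    simp only [coeff_twistedB0_neg_eV]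
  · intro F _ hF
    refine Finsupp.notMem_support_iff.1 fun hmem => ?_
    have hle := neg_card_le_weight_of_mem_support_prod_twistedB0 v (coordWeight t)
      (abs_coordWeight_eV_le t) F _ (Finsupp.support_smul hmem)
    have hlt := Finset.card_lt_card (Finset.ssubset_univ_iff.2 hF)
    rw [Finset.card_univ] at hlt
    simp only [coordWeight, smul_neg, nsmul_eq_mul, Pi.evalAddMonoidHom_apply, Pi.neg_apply,
      Pi.mul_apply, Pi.natCast_apply, eV, if_pos, mul_one, neg_le_neg_iff, Nat.cast_le] at hle
    omega

theorem b0Expansion_eq_add : ∃ R : MvLaurent m,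
    b0Expansion c v = c Finset.univ • ∏ i, twistedR0 m (v i) + R ∧
      ∀ α ∈ R.coeff.support, -(Fintype.card ι : ℤ) < degOf α := by
  refine ⟨c Finset.univ • (∏ i, twistedB0 m (v i) - ∏ i, twistedR0 m (v i)) +
      ∑ F ∈ Finset.univ.erase Finset.univ, c F • ∏ i ∈ F, twistedB0 m (v i), ?_, ?_⟩
  · rw [b0Expansion, ← Finset.add_sum_erase _ _ (Finset.mem_univ Finset.univ), smul_sub]
    abel
  · refine forall_mem_support_add (fun α hα => ?_) (forall_mem_support_sum _ _ fun F hF α hα => ?_)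
    · simpa using neg_card_lt_degOf_of_mem_support_prod_sub v Finset.univ α
        (Finsupp.support_smul hα)
    · have hlt := Finset.card_lt_card (Finset.ssubset_univ_iff.2 (Finset.ne_of_mem_erase hF))
      have := neg_card_le_weight_of_mem_support_prod_twistedB0 v (degWeight m)
        abs_degWeight_eV_le F α (Finsupp.support_smul hα)
      rw [Finset.card_univ] at hlt
      change _ ≤ degOf α at this
      omega

theorem alpha0_b0Expansion (hv : ∀ i t, v i t ≠ 0) (hc : c Finset.univ ≠ 0) :
    alpha0 (b0Expansion c v) = fun _ => (Fintype.card ι : ℤ) := by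
  funext t
  have hcoeff : (b0Expansion c v).coeff (Fintype.card ι • -(eV m t)) ≠ 0 := by
    rw [coeff_b0Expansion_neg_eV]
    exact mul_ne_zero hc (Finset.prod_ne_zero_iff.2 fun i _ => inv_ne_zero (hv i t))
  have hmin : alphaMin (b0Expansion c v) t = -(Fintype.card ι : ℤ) :=
    alphaMin_eq (neg_card_le_weight_of_mem_support_b0Expansion c v _ (abs_coordWeight_eV_le t))
      ⟨_, Finsupp.mem_support_iff.2 hcoeff, by simp [eV]⟩
  simp [alpha0, hmin]

theorem lowComp_fplus_b0Expansion (hm : 0 < m) (hv : ∀ i t, v i t ≠ 0)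
    (hc : c Finset.univ ≠ 0) :
    lowComp (fplus (b0Expansion c v)) =
      mono (fun _ => (Fintype.card ι : ℤ)) (c Finset.univ) * ∏ i, twistedR0 m (v i) := by
  set N : Fin m → ℤ := fun _ => (Fintype.card ι : ℤ)
  have hdegN : degOf N = m * Fintype.card ι := by simp [N, degOf]
  obtain ⟨R, hG, hR⟩ := b0Expansion_eq_add c v
  have hmono : mono N 1 * (c Finset.univ • ∏ i, twistedR0 m (v i)) =
      mono N (c Finset.univ) * ∏ i, twistedR0 m (v i) := by
    rw [← mono_zero_mul, ← mul_assoc, mono_mul_mono, add_zero, one_mul]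
  rw [fplus_eq_mono_mul, alpha0_b0Expansion c v hv hc, hG, mul_add, hmono]
  refine lowComp_add_of_lt (c := m * Fintype.card ι - Fintype.card ι) ?_
    (forall_mem_support_mul fun α hα β hβ => ?_) (forall_mem_support_mul fun α hα β hβ => ?_)
  · refine mul_ne_zero (fun h => hc ?_) <|
      Finset.prod_ne_zero_iff.2 fun i _ => twistedR0_ne_zero hm (hv i)
    simpa [mono] using congrArg (fun f : MvLaurent m => f.coeff N) h
  · have hβ' := weight_eq_of_mem_support_prod (degWeight m) _ _ (fun _ => -1)
      (fun i _ γ hγ => degOf_of_mem_support_twistedR0 hγ) β hβ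
    simp only [Finset.sum_const, Finset.card_univ, smul_neg, nsmul_eq_mul, mul_one] at hβ'
    rw [eq_of_mem_support_mono hα]
    change degWeight m (N + β) = _
    rw [map_add, hβ']
    change degOf N + _ = _
    rw [hdegN]
    ring
  · rw [eq_of_mem_support_mono hα]
    change _ < degWeight m (N + β)
    rw [map_add]
    change _ < degOf N + degOf β
    linarith [hR β hβ]

theorem hat_b0Expansion :
    hat (b0Expansion c v) = b0Expansion c fun i => invLast (v i) := by
  rw [← hatRingHom_apply, b0Expansion, b0Expansion, map_sum]
  refine Finset.sum_congr rfl fun F _ => ?_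
  rw [hatRingHom_apply, hat_smul, ← hatRingHom_apply, map_prod]
  simp only [hatRingHom_apply, hat_twistedB0]

end Expansion

end MvL

namespace Per

variable {d : ℕ}

theorem card_W (q : Fin d → ℕ) : Fintype.card (W d q) = Qn q := by
  simp [Qn, Fintype.card_pi]

theorem e2πi_add (r s : ℂ) : e2πi (r + s) = e2πi r * e2πi s := by
  rw [e2πi, e2πi, e2πi, mul_add, Complex.exp_add]

theorem e2πi_natCast (k : ℕ) : e2πi k = 1 := by
  rw [e2πi, mul_comm]
  exact Complex.exp_nat_mul_two_pi_mul_I k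

theorem e2πi_val_neg_div {n : ℕ} (a : Fin n) :
    e2πi (((-a : Fin n) : ℕ) / n) = (e2πi ((a : ℕ) / n))⁻¹ := by
  have : NeZero n := ⟨a.pos.ne'⟩
  obtain ⟨k, hk⟩ : n ∣ ((-a : Fin n) : ℕ) + a := Nat.dvd_of_mod_eq_zero <| by
    rw [← Fin.val_add, neg_add_cancel, Fin.val_zero]
  refine eq_inv_of_mul_eq_one_left ?_
  rw [← e2πi_add, ← add_div, ← Nat.cast_add, hk, Nat.cast_mul,
    mul_div_cancel_left₀ _ (Nat.cast_ne_zero.2 (NeZero.ne n)), e2πi_natCast]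

def reflectLast (q : Fin d → ℕ) (w : W d q) : W d q :=
  fun t => if (t : ℕ) = d - 1 then -(w t) else w t

theorem reflectLast_involutive (q : Fin d → ℕ) : Function.Involutive (reflectLast q) := by
  intro w
  funext t
  have : NeZero (q t) := ⟨(w t).pos.ne'⟩
  simp only [reflectLast]
  split_ifs <;> simp

theorem μ_reflectLast (q : Fin d → ℕ) (w : W d q) :
    μ q (wz (reflectLast q w)) = invLast (μ q (wz w)) := by
  funext t
  simp only [μ, wz, reflectLast, invLast, Int.cast_natCast]
  split_ifs
  · exact e2πi_val_neg_div (w t)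
  · rfl

theorem prod_twistedR0_invLast (q : Fin d → ℕ) :
    ∏ w : W d q, twistedR0 d (invLast (μ q (wz w))) =
      ∏ w : W d q, twistedR0 d (μ q (wz w)) := by
  simp only [← μ_reflectLast]
  exact Equiv.prod_comp (reflectLast_involutive q).toPerm fun w => twistedR0 d (μ q (wz w))

end Per

namespace Decor

open Matrix Polynomial

variable {d ν : ℕ}

def cycleAdj (ν : ℕ) : Matrix (Fin ν) (Fin ν) ℂ :=
  of fun i j => if i = j then 0
    else if ((i : ℕ) + 1 = (j : ℕ) ∨ (j : ℕ) + 1 = (i : ℕ) ∨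
        ((i : ℕ) = 0 ∧ (j : ℕ) = ν - 1) ∨ ((j : ℕ) = 0 ∧ (i : ℕ) = ν - 1))
      then 1 else 0

def potentialMat (ν : ℕ) (q : Fin d → ℕ) (V : Fin ν → (Fin d → ℤ) → ℂ) :
    Matrix (Fin ν × W d q) (Fin ν × W d q) ℂ :=
  of fun x y => if x.1 = y.1 then Vhat q V x.1 x.2 y.2 else 0

/-- The `z`-independent part of `D_z + B_V`. -/
def constPart (ν : ℕ) (q : Fin d → ℕ) (V : Fin ν → (Fin d → ℤ) → ℂ) :
    Matrix (Fin ν × W d q) (Fin ν × W d q) ℂ :=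
  blockDiagonal (fun _ => cycleAdj ν) + potentialMat ν q V

def hubDiag (ν : ℕ) (q : Fin d → ℕ) (x : Fin ν × W d q) : MvLaurent d :=
  if (x.1 : ℕ) = 0 then b0 d q (wz x.2) else 0

theorem decorBlock_eq (q : Fin d → ℕ) (n : Fin d → ℤ) :
    decorBlock d ν q n = diagonal (fun i : Fin ν => if (i : ℕ) = 0 then b0 d q n else 0) +
      (cycleAdj ν).map (algebraMap ℂ (MvLaurent d)) := by
  refine Matrix.ext fun i j => ?_
  by_cases hij : i = j
  · subst hij
    simp [decorBlock, cycleAdj]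
  · simp only [decorBlock, cycleAdj, Matrix.add_apply, diagonal_apply_ne _ hij, map_apply, of_apply,
      if_neg hij, zero_add]
    split_ifs <;> simp [AddMonoidAlgebra.one_def]

theorem decorPt_eq_det (q : Fin d → ℕ) (V : Fin ν → (Fin d → ℤ) → ℂ) (lam : ℂ) :
    decorPt d ν q V lam = (diagonal (hubDiag ν q) +
      (constPart ν q V - scalar _ lam).map (algebraMap ℂ (MvLaurent d))).det := by
  have hD : decorD d ν q = diagonal (hubDiag ν q) +
      (blockDiagonal fun _ => cycleAdj ν).map (algebraMap ℂ (MvLaurent d)) := by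
    rw [blockDiagonal_map _ _ (map_zero _), show diagonal (hubDiag ν q) = blockDiagonal fun w =>
      diagonal fun i : Fin ν => if (i : ℕ) = 0 then b0 d q (wz w) else 0 by
        rw [blockDiagonal_diagonal]; rfl, ← blockDiagonal_add]
    refine Matrix.ext fun ⟨i, w⟩ ⟨j, w'⟩ => ?_
    simp only [decorD, blockDiagonal_apply, decorBlock_eq, Pi.add_apply]
  have hB : BmatL ν q V = (potentialMat ν q V).map (algebraMap ℂ (MvLaurent d)) := by
    refine Matrix.ext fun x y => ?_
    simp only [BmatL, potentialMat, map_apply, of_apply]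
    split_ifs <;> simp [mono]
  rw [decorPt, hD, hB, constPart, Matrix.map_sub _ (map_sub _), Matrix.map_add _ (map_add _),
    add_assoc, add_sub_assoc, scalar_apply, diagonal_map (map_zero _), smul_one_eq_diagonal]
  rfl

/-- The vertex of the `ν`-cycle at `n` that is glued to the lattice (`1` in the paper). -/
def hub (hν : 0 < ν) (q : Fin d → ℕ) : W d q ↪ Fin ν × W d q :=
  ⟨fun w => (⟨0, hν⟩, w), fun _ _ h => congrArg Prod.snd h⟩

theorem hub_snd (hν : 0 < ν) (q : Fin d → ℕ) {x : Fin ν × W d q} (hx : (x.1 : ℕ) = 0) :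
    hub hν q x.2 = x :=
  Prod.ext (Fin.ext hx.symm) rfl

def hubCoeff (hν : 0 < ν) (q : Fin d → ℕ) (V : Fin ν → (Fin d → ℤ) → ℂ) (lam : ℂ)
    (F : Finset (W d q)) : ℂ :=
  (of fun x y => if x ∈ F.map (hub hν q) then (1 : Matrix (Fin ν × W d q) _ ℂ) x y
    else (constPart ν q V - scalar (Fin ν × W d q) lam) x y).det

theorem decorPt_eq_b0Expansion (hν : 0 < ν) (q : Fin d → ℕ) (V : Fin ν → (Fin d → ℤ) → ℂ)
    (lam : ℂ) : decorPt d ν q V lam = b0Expansion (hubCoeff hν q V lam) fun w => μ q (wz w) := by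
  rw [decorPt_eq_det, det_diagonal_add, b0Expansion]
  symm
  refine Finset.sum_of_injOn (fun F => F.map (hub hν q)) (Finset.map_injective _).injOn
    (fun _ _ => Finset.mem_coe.2 (Finset.mem_univ _)) (fun S _ hS => ?_) (fun F _ => ?_)
  · obtain ⟨x, hxS, hx⟩ : ∃ x ∈ S, (x.1 : ℕ) ≠ 0 := by
      by_contra! h
      refine hS ⟨S.image Prod.snd, Finset.mem_coe.2 (Finset.mem_univ _), ?_⟩
      change (S.image Prod.snd).map (hub hν q) = S
      rw [Finset.map_eq_image, Finset.image_image]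
      exact (Finset.image_congr fun x hx => hub_snd hν q (h x hx)).trans Finset.image_id
    rw [Finset.prod_eq_zero hxS (if_neg hx), zero_mul]
  · have hmap : (of fun x y => if x ∈ F.map (hub hν q) then (1 : Matrix _ _ (MvLaurent d)) x y
        else (constPart ν q V - scalar _ lam).map (algebraMap ℂ (MvLaurent d)) x y) =
        (algebraMap ℂ (MvLaurent d)).mapMatrix (of fun x y =>
          if x ∈ F.map (hub hν q) then (1 : Matrix _ _ ℂ) x y
          else (constPart ν q V - scalar (Fin ν × W d q) lam) x y) := by
      refine Matrix.ext fun x y => ?_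
      simp only [of_apply, RingHom.mapMatrix_apply, map_apply, one_apply]
      split_ifs <;> simp [AddMonoidAlgebra.one_def]
    rw [hmap, ← RingHom.map_det, Finset.prod_map, mul_comm, ← Algebra.smul_def]
    rfl

abbrev NonHub (hν : 0 < ν) (q : Fin d → ℕ) : Type :=
  {x : Fin ν × W d q // x ∉ Finset.univ.map (hub hν q)}

theorem card_nonHub (hν : 0 < ν) (q : Fin d → ℕ) :
    Fintype.card (NonHub hν q) = (ν - 1) * Qn q := by
  rw [Fintype.card_subtype_compl, Fintype.card_coe, Finset.card_map, Finset.card_univ,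
    Fintype.card_prod, Fintype.card_fin, card_W, Nat.sub_mul, one_mul]

def sPoly (hν : 0 < ν) (q : Fin d → ℕ) (V : Fin ν → (Fin d → ℤ) → ℂ) : ℂ[X] :=
  C ((-1) ^ ((ν - 1) * Qn q)) *
    ((constPart ν q V).submatrix (Subtype.val : NonHub hν q → _) Subtype.val).charpoly

theorem sPoly_degree (hν : 0 < ν) (q : Fin d → ℕ) (V : Fin ν → (Fin d → ℤ) → ℂ) :
    (sPoly hν q V).degree = ((ν - 1) * Qn q : ℕ) := by
  rw [sPoly, degree_C_mul (pow_ne_zero _ (neg_ne_zero.2 one_ne_zero)), charpoly_degree_eq_dim,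
    card_nonHub]

theorem hubCoeff_univ (hν : 0 < ν) (q : Fin d → ℕ) (V : Fin ν → (Fin d → ℤ) → ℂ) (lam : ℂ) :
    hubCoeff hν q V lam Finset.univ = (sPoly hν q V).eval lam := by
  have hsub : (constPart ν q V - scalar _ lam).submatrix (Subtype.val : NonHub hν q → _)
      Subtype.val = (constPart ν q V).submatrix Subtype.val Subtype.val - scalar _ lam := by
    refine Matrix.ext fun x y => ?_
    simp [diagonal_apply, Subtype.ext_iff]
  rw [hubCoeff, det_of_ite_one_eq_det_submatrix, hsub, sPoly, eval_mul, eval_C, eval_charpoly, ← neg_sub, det_neg,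
    card_nonHub]

end Decor

theorem decorated_lowest_component_structure_general
    (d ν : ℕ) (hd : 2 ≤ d) (hν : 3 ≤ ν)
    (q : Fin d → ℕ)
    (V : Fin ν → (Fin d → ℤ) → ℂ) :
    ∃ s : Polynomial ℂ,
      s.degree = ((ν - 1) * Qn q : ℕ) ∧
      ∀ lam : ℂ,
        (∀ α ∈ Finsupp.support (decorPt d ν q V lam).coeff, -(Qn q : ℤ) ≤ ∑ t, α t) ∧
        (∃ R : MvLaurent d,
          decorPt d ν q V lam =
            mono 0 (s.eval lam) * ∏ n : W d q, r0mu d q (wz n) + R ∧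
          ∀ α ∈ Finsupp.support R.coeff, -(Qn q : ℤ) < ∑ t, α t) ∧
        (s.eval lam ≠ 0 →
          lowComp (fplus (decorPt d ν q V lam)) =
            mono (fun _ => (Qn q : ℤ)) (s.eval lam) * ∏ n : W d q, r0mu d q (wz n) ∧
          lowComp (fplus (hat (decorPt d ν q V lam))) =
            mono (fun _ => (Qn q : ℤ)) (s.eval lam) * ∏ n : W d q, r0mu d q (wz n)) := by
  have hν0 : 0 < ν := by omega
  have hμ : ∀ (w : W d q) t, μ q (wz w) t ≠ 0 := fun _ _ => Complex.exp_ne_zero _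
  have hμ' : ∀ (w : W d q) t, invLast (μ q (wz w)) t ≠ 0 := fun w => μ_reflectLast q w ▸ hμ _
  refine ⟨sPoly hν0 q V, sPoly_degree hν0 q V, fun lam => ⟨?_, ?_, fun hs => ⟨?_, ?_⟩⟩⟩
  all_goals rw [decorPt_eq_b0Expansion hν0]
  · have := neg_card_le_weight_of_mem_support_b0Expansion (hubCoeff hν0 q V lam)
      (fun w => μ q (wz w)) (degWeight d) abs_degWeight_eV_le
    rwa [card_W] at this
  · obtain ⟨R, hR, hRdeg⟩ := b0Expansion_eq_add (hubCoeff hν0 q V lam) fun w => μ q (wz w)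
    rw [card_W] at hRdeg
    exact ⟨R, by rw [hR, hubCoeff_univ, mono_zero_mul]; rfl, hRdeg⟩
  · rw [lowComp_fplus_b0Expansion _ _ (by omega) hμ (hubCoeff_univ .. ▸ hs), hubCoeff_univ, card_W]
    rfl
  · rw [hat_b0Expansion, lowComp_fplus_b0Expansion _ _ (by omega) hμ' (hubCoeff_univ .. ▸ hs),
      hubCoeff_univ, card_W, prod_twistedR0_invLast]
    rfl

/-- **Structure of the asymptotics for the decorated lattice**: there is a
polynomial `s` of degree exactly `(ν-1)Q` with
`P̃(z;λ) = s(λ)·∏_{n∈W} r₀(μ_n⊙z) + R(z;λ)`, all monomials of `P̃` of total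
degree `≥ -Q` and those of `R` of total degree `> -Q`; consequently whenever
`s(λ) ≠ 0`, `h̃₀(z;λ) = h̃∞(z;λ) = s(λ)(z₁⋯z_d)^Q ∏_{n∈W} r₀(μ_n⊙z)`. -/
theorem decorated_lowest_component_structure
    (d ν : ℕ) (hd : 2 ≤ d) (hν : 3 ≤ ν)
    (q : Fin d → ℕ) (hq : ∀ t, 1 ≤ q t)
    (V : Fin ν → (Fin d → ℤ) → ℂ) (hV : QPeriodic q V) :
    ∃ s : Polynomial ℂ,
      s.degree = ((ν - 1) * Qn q : ℕ) ∧
      ∀ lam : ℂ,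
        (∀ α ∈ Finsupp.support (decorPt d ν q V lam).coeff, -(Qn q : ℤ) ≤ ∑ t, α t) ∧
        (∃ R : MvLaurent d,
          decorPt d ν q V lam =
            mono 0 (s.eval lam) * ∏ n : W d q, r0mu d q (wz n) + R ∧
          ∀ α ∈ Finsupp.support R.coeff, -(Qn q : ℤ) < ∑ t, α t) ∧
        (s.eval lam ≠ 0 →
          lowComp (fplus (decorPt d ν q V lam)) =
            mono (fun _ => (Qn q : ℤ)) (s.eval lam) * ∏ n : W d q, r0mu d q (wz n) ∧
          lowComp (fplus (hat (decorPt d ν q V lam))) =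
            mono (fun _ => (Qn q : ℤ)) (s.eval lam) * ∏ n : W d q, r0mu d q (wz n)) :=
  decorated_lowest_component_structure_general d ν hd hν q V
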